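/- arXiv:1211.3667 — 2 statements merged into one kernel-verified Lean document; each statement's English description precedes it below -/
import Mathlib

section
/- For a nonnegative measurable function f on a probability space with ∫ f dμ = 1, and a measure-preserving involution T, and a [0,1]-valued function g, the inequality ∫ g·(f∘T − f) dμ ≤ (1/(2λ))·∫ (√(f∘T) − √f)² dμ + 2λ holds for every λ > 0. -/
open MeasureTheory

/-! Since `f ∘ T - f = (√(f ∘ T) - √f)(√(f ∘ T) + √f)` and `|g| ≤ 1`, Young's inequality bounds
the integrand pointwise by `(√(f ∘ T) - √f)² / (2λ) + λ (f ∘ T + f)`; measure preservation makes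
the last term integrate to `2λ`. -/

lemma mul_le_young {a b lam : ℝ} (hlam : 0 < lam) :
    a * b ≤ 1 / (2 * lam) * a ^ 2 + lam / 2 * b ^ 2 := by
  have hgap : 1 / (2 * lam) * a ^ 2 + lam / 2 * b ^ 2 - a * b = (a - lam * b) ^ 2 / (2 * lam) := by
    field_simp
    ring
  linarith [show 0 ≤ (a - lam * b) ^ 2 / (2 * lam) by positivity]

lemma mul_sq_sub_sq_le {c s t lam : ℝ} (hc : |c| ≤ 1) (hlam : 0 < lam) :
    c * (s ^ 2 - t ^ 2) ≤ 1 / (2 * lam) * (s - t) ^ 2 + lam * (s ^ 2 + t ^ 2) := by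
  calc c * (s ^ 2 - t ^ 2) ≤ |c| * (|s - t| * |s + t|) := by
        rw [show s ^ 2 - t ^ 2 = (s - t) * (s + t) by ring, ← abs_mul, ← abs_mul]
        exact le_abs_self _
    _ ≤ |s - t| * |s + t| := mul_le_of_le_one_left (by positivity) hc
    _ ≤ 1 / (2 * lam) * |s - t| ^ 2 + lam / 2 * |s + t| ^ 2 := mul_le_young hlam
    _ ≤ 1 / (2 * lam) * (s - t) ^ 2 + lam * (s ^ 2 + t ^ 2) := by
        rw [sq_abs, sq_abs]
        nlinarith [sq_nonneg (s - t)]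

lemma mul_sub_le_sq_sub_sqrt {c x y lam : ℝ} (hc : |c| ≤ 1) (hlam : 0 < lam) (hx : 0 ≤ x)
    (hy : 0 ≤ y) :
    c * (x - y) ≤ 1 / (2 * lam) * (Real.sqrt x - Real.sqrt y) ^ 2 + lam * (x + y) := by
  simpa only [Real.sq_sqrt hx, Real.sq_sqrt hy] using
    mul_sq_sub_sq_le (s := Real.sqrt x) (t := Real.sqrt y) hc hlam

lemma integrable_sq_sub_sqrt {Ω : Type*} [MeasurableSpace Ω] {μ : Measure Ω} {u v : Ω → ℝ}
    (hu : Integrable u μ) (hv : Integrable v μ) (hu0 : ∀ ω, 0 ≤ u ω) (hv0 : ∀ ω, 0 ≤ v ω) :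
    Integrable (fun ω => (Real.sqrt (u ω) - Real.sqrt (v ω)) ^ 2) μ := by
  refine (hu.add hv).mono' ?_ (Filter.Eventually.of_forall fun ω => ?_)
  · exact ((hu.aemeasurable.sqrt.sub hv.aemeasurable.sqrt).pow_const 2).aestronglyMeasurable
  · rw [Real.norm_of_nonneg (sq_nonneg _), Pi.add_apply, sub_sq, Real.sq_sqrt (hu0 ω),
      Real.sq_sqrt (hv0 ω)]
    nlinarith [mul_nonneg (Real.sqrt_nonneg (u ω)) (Real.sqrt_nonneg (v ω))]

theorem stmt2_general {Ω : Type*} [MeasurableSpace Ω] (μ : Measure Ω)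
    (T : Ω → Ω) (hT : MeasurePreserving T μ μ)
    (f g : Ω → ℝ) (hf0 : ∀ ω, 0 ≤ f ω) (hfi : Integrable f μ)
    (hf1 : ∫ ω, f ω ∂μ = 1)
    (hg : Measurable g) (hg0 : ∀ ω, 0 ≤ g ω) (hg1 : ∀ ω, g ω ≤ 1)
    (lam : ℝ) (hlam : 0 < lam) :
    ∫ ω, g ω * (f (T ω) - f ω) ∂μ ≤
      (1 / (2 * lam)) * (∫ ω, (Real.sqrt (f (T ω)) - Real.sqrt (f ω)) ^ 2 ∂μ) + 2 * lam := by
  have hfT : Integrable (fun ω => f (T ω)) μ := hT.integrable_comp_of_integrable hfi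
  have hfT1 : ∫ ω, f (T ω) ∂μ = 1 := by
    rw [← hf1, ← integral_map hT.aemeasurable (by rw [hT.map_eq]; exact hfi.aestronglyMeasurable),
      hT.map_eq]
  have hg_abs : ∀ ω, |g ω| ≤ 1 := fun ω => abs_le.2 ⟨by linarith [hg0 ω], hg1 ω⟩
  have hsq := integrable_sq_sub_sqrt hfT hfi (fun ω => hf0 (T ω)) hf0
  have hsum : Integrable (fun ω => f (T ω) + f ω) μ := hfT.add hfi
  calc ∫ ω, g ω * (f (T ω) - f ω) ∂μ
      ≤ ∫ ω, (1 / (2 * lam) * (Real.sqrt (f (T ω)) - Real.sqrt (f ω)) ^ 2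
          + lam * (f (T ω) + f ω)) ∂μ :=
        integral_mono ((hfT.sub hfi).bdd_mul hg.aestronglyMeasurable
            (Filter.Eventually.of_forall hg_abs))
          ((hsq.const_mul _).add (hsum.const_mul _))
          fun ω => mul_sub_le_sq_sub_sqrt (hg_abs ω) hlam (hf0 (T ω)) (hf0 ω)
    _ = 1 / (2 * lam) * (∫ ω, (Real.sqrt (f (T ω)) - Real.sqrt (f ω)) ^ 2 ∂μ) + 2 * lam := by
        rw [integral_add (hsq.const_mul _) (hsum.const_mul _), integral_const_mul,
          integral_const_mul, integral_add hfT hfi, hfT1, hf1]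
        ring

/-- Young-inequality estimate: for a density `f`, measure-preserving involution `T`,
`g` with values in `[0,1]`, and `λ > 0`:
`∫ g·(f∘T − f) dμ ≤ (1/(2λ))·∫ (√(f∘T) − √f)² dμ + 2λ`. -/
theorem stmt2 {Ω : Type*} [MeasurableSpace Ω] (μ : Measure Ω) [IsProbabilityMeasure μ]
    (T : Ω → Ω) (hT : MeasurePreserving T μ μ) (hTT : T ∘ T = id)
    (f g : Ω → ℝ) (hf : Measurable f) (hf0 : ∀ ω, 0 ≤ f ω) (hfi : Integrable f μ)
    (hf1 : ∫ ω, f ω ∂μ = 1)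
    (hg : Measurable g) (hg0 : ∀ ω, 0 ≤ g ω) (hg1 : ∀ ω, g ω ≤ 1)
    (lam : ℝ) (hlam : 0 < lam) :
    ∫ ω, g ω * (f (T ω) - f ω) ∂μ ≤
      (1 / (2 * lam)) * (∫ ω, (Real.sqrt (f (T ω)) - Real.sqrt (f ω)) ^ 2 ∂μ) + 2 * lam :=
  stmt2_general μ T hT f g hf0 hfi hf1 hg hg0 hg1 lam hlam
end

section
/- Let N̄ be a Poisson process of rate r > 0 on [0,∞), and let φⁿ, φ: [0,∞) → [0,∞) be continuous nondecreasing time changes with φⁿ → φ uniformly on compacts. Define τⁿ (resp. τ) as the first jump time of t ↦ N̄(φⁿ(t)) (resp. t ↦ N̄(φ(t))). If φ is strictly increasing, then τⁿ → τ almost surely. -/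
open MeasureTheory Filter

/-- Convergence of first jump times of time-changed Poisson processes: if `T₁` is the
(exponentially distributed) first jump time of a rate-`r` Poisson process and the time
changes `φⁿ → φ` uniformly on compacts with `φ` strictly increasing, then
`τⁿ = inf{t ≥ 0 : φⁿ(t) ≥ T₁} → τ = inf{t ≥ 0 : φ(t) ≥ T₁}` almost surely. -/
theorem stmt18 {Ω : Type*} [MeasurableSpace Ω] (μ : Measure Ω) [IsProbabilityMeasure μ]
    (r : ℝ) (hr : 0 < r) (T₁ : Ω → ℝ) (hT₁ : Measurable T₁)
    (hexp : ∀ t : ℝ, 0 ≤ t → μ {ω | t < T₁ ω} = ENNReal.ofReal (Real.exp (-r * t)))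
    (φn : ℕ → ℝ → ℝ) (φ : ℝ → ℝ)
    (hφnc : ∀ n, Continuous (φn n)) (hφc : Continuous φ)
    (hφnm : ∀ n, Monotone (φn n)) (hφm : StrictMono φ)
    (hφntop : ∀ n, Tendsto (φn n) atTop atTop)
    (hφtop : Tendsto φ atTop atTop)
    (hconv : ∀ K : ℝ, TendstoUniformlyOn (fun n => φn n) φ atTop (Set.Icc 0 K)) :
    ∀ᵐ ω ∂μ, Tendsto (fun n => sInf {t : ℝ | 0 ≤ t ∧ T₁ ω ≤ φn n t}) atTop
      (nhds (sInf {t : ℝ | 0 ≤ t ∧ T₁ ω ≤ φ t})) := by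
  refine Eventually.of_forall fun ω => ?_
  set x := T₁ ω with hxdef
  have hSne : ∀ (f : ℝ → ℝ), Tendsto f atTop atTop →
      Set.Nonempty {t : ℝ | 0 ≤ t ∧ x ≤ f t} := by
    intro f hf
    obtain ⟨t, ht0, htx⟩ := ((eventually_ge_atTop (0:ℝ)).and (hf.eventually_ge_atTop x)).exists
    exact ⟨t, ht0, htx⟩
  have hbdd : ∀ (f : ℝ → ℝ), BddBelow {t : ℝ | 0 ≤ t ∧ x ≤ f t} :=
    fun f => ⟨0, fun t ht => ht.1⟩
  have hτ0 : ∀ n, (0:ℝ) ≤ sInf {t : ℝ | 0 ≤ t ∧ x ≤ φn n t} := fun n =>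
    le_csInf (hSne _ (hφntop n)) fun t ht => ht.1
  set τ := sInf {t : ℝ | 0 ≤ t ∧ x ≤ φ t} with hτdef
  rw [tendsto_order]
  constructor
  · -- lower bound: ∀ a < τ, eventually a < τⁿ
    intro a ha
    rcases lt_or_ge a 0 with ha0 | ha0
    · exact Eventually.of_forall fun n => ha0.trans_le (hτ0 n)
    · set a' := (a + τ) / 2 with ha'def
      have ha'1 : a < a' := by dsimp [a']; linarith
      have ha'2 : a' < τ := by dsimp [a']; linarith
      have ha'0 : (0:ℝ) ≤ a' := le_trans ha0 ha'1.le
      have hφa' : φ a' < x := by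
        by_contra h
        push_neg at h
        exact absurd (csInf_le (hbdd φ) ⟨ha'0, h⟩) (not_le.mpr ha'2)
      have hev := (Metric.tendstoUniformlyOn_iff.mp (hconv a')) (x - φ a') (by linarith)
      filter_upwards [hev] with n hn
      have key : ∀ t ∈ {t : ℝ | 0 ≤ t ∧ x ≤ φn n t}, a' ≤ t := by
        intro t ht
        by_contra hlt
        push_neg at hlt
        have hd := hn t ⟨ht.1, hlt.le⟩
        rw [Real.dist_eq, abs_lt] at hd
        have h2 : φ t ≤ φ a' := hφm.monotone hlt.le
        have := ht.2
        linarith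
      exact lt_of_lt_of_le ha'1 (le_csInf (hSne _ (hφntop n)) key)
  · -- upper bound: ∀ b > τ, eventually τⁿ < b
    intro b hb
    obtain ⟨t₀, ht₀, ht₀b⟩ := exists_lt_of_csInf_lt (hSne _ hφtop) hb
    set t₁ := (t₀ + b) / 2 with ht₁def
    have h01 : t₀ < t₁ := by dsimp [t₁]; linarith
    have h1b : t₁ < b := by dsimp [t₁]; linarith
    have ht₁0 : (0:ℝ) ≤ t₁ := le_trans ht₀.1 h01.le
    have hxlt : x < φ t₁ := lt_of_le_of_lt ht₀.2 (hφm h01)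
    have hpt : Tendsto (fun n => φn n t₁) atTop (nhds (φ t₁)) :=
      (hconv t₁).tendsto_at ⟨ht₁0, le_refl t₁⟩
    filter_upwards [hpt.eventually (eventually_gt_nhds hxlt)] with n hn
    exact lt_of_le_of_lt (csInf_le (hbdd _) ⟨ht₁0, hn.le⟩) h1b
end
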